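/- arXiv:0907.5231 — 4 statements merged into one kernel-verified Lean document; each statement's English description precedes it below -/
import Mathlib

section
/- Let D ⊆ ℝ² be an open set star-shaped with respect to a point a ∈ D, and let u : D → ℝ be continuously differentiable. Define the Poincaré lifting (P_a u)(x) = ∫₀¹ τ u(a + τ(x−a)) (x−a) dτ. Then div(P_a u) = u on D, i.e., P_a is a right inverse of the two-dimensional divergence operator on C¹ functions. -/
open MeasureTheory

/-- Two-dimensional divergence of a vector field. -/
noncomputable def div2 (v : (Fin 2 → ℝ) → (Fin 2 → ℝ)) (x : Fin 2 → ℝ) : ℝ :=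
  ∑ i : Fin 2, fderiv ℝ v x (Pi.single i 1) i

/-- Poincaré lifting centered at `a`. -/
noncomputable def poincareLift (a : Fin 2 → ℝ) (u : (Fin 2 → ℝ) → ℝ)
    (x : Fin 2 → ℝ) : Fin 2 → ℝ :=
  ∫ τ in (0:ℝ)..1, (τ * u (a + τ • (x - a))) • (x - a)

/-!
Pulling the constant vector `x - a` out of the integral gives `P_a u (x) = W(x) • (x - a)` with
`W(x) = ∫₀¹ τ u(a + τ(x - a)) dτ`, so in the plane `div (P_a u) = 2 W + DW (x - a)`.
Star-shapedness keeps every segment `[a, y]`, `y ∈ D`, inside `D`, where `Du` is continuous; by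
compactness `W` may be differentiated under the integral sign, and then
`2 W(x) + DW(x) (x - a) = ∫₀¹ d/dτ [τ² u(a + τ(x - a))] dτ = u(x)`.
-/

open Set Metric Function Topology

theorem hasFDerivAt_intervalIntegral_of_continuousOn_fderiv
    {E F : Type*} [NormedAddCommGroup E] [NormedSpace ℝ E] [ProperSpace E]
    [NormedAddCommGroup F] [NormedSpace ℝ F]
    {f : E → ℝ → F} {f' : E → ℝ → E →L[ℝ] F} {s : Set E} {x₀ : E} {a b : ℝ}
    (hs : s ∈ 𝓝 x₀) (hf : ∀ y ∈ s, ContinuousOn (f y) (uIcc a b))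
    (hf' : ContinuousOn (uncurry f') (s ×ˢ uIcc a b))
    (hdiff : ∀ y ∈ s, ∀ τ ∈ uIcc a b, HasFDerivAt (f · τ) (f' y τ) y) :
    HasFDerivAt (fun y ↦ ∫ τ in a..b, f y τ) (∫ τ in a..b, f' x₀ τ) x₀ := by
  obtain ⟨r, hr, hrs⟩ := nhds_basis_closedBall.mem_iff.mp hs
  obtain ⟨C, hC⟩ := ((isCompact_closedBall x₀ r).prod isCompact_uIcc).exists_bound_of_continuousOn
    (hf'.mono (prod_mono hrs le_rfl))
  have hf'x₀ : ContinuousOn (f' x₀) (uIcc a b) :=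
    hf'.comp (continuousOn_const.prodMk continuousOn_id)
      fun τ hτ ↦ ⟨mem_of_mem_nhds hs, hτ⟩
  refine intervalIntegral.hasFDerivAt_integral_of_dominated_of_fderiv_le (bound := fun _ ↦ C)
    (ball_mem_nhds x₀ hr) ?_ (hf x₀ (mem_of_mem_nhds hs)).intervalIntegrable
    ((hf'x₀.mono uIoc_subset_uIcc).aestronglyMeasurable measurableSet_uIoc) ?_
    intervalIntegrable_const ?_
  · filter_upwards [hs] with y hy
    exact ((hf y hy).mono uIoc_subset_uIcc).aestronglyMeasurable measurableSet_uIoc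
  · filter_upwards with τ hτ y hy
    exact hC (y, τ) ⟨ball_subset_closedBall hy, uIoc_subset_uIcc hτ⟩
  · filter_upwards with τ hτ y hy
    exact hdiff y (hrs (ball_subset_closedBall hy)) τ (uIoc_subset_uIcc hτ)

section RayIntegral

variable {E : Type*} [NormedAddCommGroup E] [NormedSpace ℝ E]

noncomputable def weightedRayIntegral (a : E) (u : E → ℝ) (y : E) : ℝ :=
  ∫ τ in (0:ℝ)..1, τ * u (a + τ • (y - a))

theorem hasFDerivAt_weightedRayIntegral [ProperSpace E] {D : Set E} {a x : E} {u : E → ℝ}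
    (hD : IsOpen D) (hstar : ∀ y ∈ D, ∀ τ ∈ Icc (0:ℝ) 1, a + τ • (y - a) ∈ D)
    (hu : ContDiffOn ℝ 1 u D) (hx : x ∈ D) :
    HasFDerivAt (weightedRayIntegral a u)
      (∫ τ in (0:ℝ)..1, τ ^ 2 • fderiv ℝ u (a + τ • (x - a))) x := by
  have hray : Continuous fun p : E × ℝ ↦ a + p.2 • (p.1 - a) := by fun_prop
  have hmaps : MapsTo (fun p : E × ℝ ↦ a + p.2 • (p.1 - a)) (D ×ˢ Icc 0 1) D :=
    fun p hp ↦ hstar p.1 hp.1 p.2 hp.2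
  have hDu : ContinuousOn (fderiv ℝ u) D := hu.continuousOn_fderiv_of_isOpen hD le_rfl
  refine hasFDerivAt_intervalIntegral_of_continuousOn_fderiv
    (f := fun y τ ↦ τ * u (a + τ • (y - a)))
    (f' := fun y τ ↦ τ ^ 2 • fderiv ℝ u (a + τ • (y - a))) (hD.mem_nhds hx) ?_ ?_ ?_ <;>
    rw [uIcc_of_le zero_le_one]
  · intro y hy
    exact continuousOn_id.mul <| hu.continuousOn.comp (hray.comp
      (continuous_const.prodMk continuous_id)).continuousOn fun τ hτ ↦ hmaps (mk_mem_prod hy hτ)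
  · exact (continuousOn_snd.pow 2).smul (hDu.comp hray.continuousOn hmaps)
  · intro y hy τ hτ
    have hray_deriv : HasFDerivAt (fun y ↦ a + τ • (y - a)) (τ • ContinuousLinearMap.id ℝ E) y :=
      (((hasFDerivAt_id y).sub_const a).const_smul τ).const_add a
    have hu_ray : HasFDerivAt u (fderiv ℝ u (a + τ • (y - a))) (a + τ • (y - a)) :=
      ((hu.contDiffAt (hD.mem_nhds (hmaps (mk_mem_prod hy hτ)))).differentiableAt
        one_ne_zero).hasFDerivAt
    refine ((hu_ray.comp y hray_deriv).const_mul τ).congr_fderiv ?_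
    ext v
    simp [pow_two, mul_assoc]

theorem two_mul_weightedRayIntegral_add_fderiv {D : Set E} {a x : E} {u : E → ℝ}
    (hD : IsOpen D) (hu : ContDiffOn ℝ 1 u D)
    (hseg : ∀ τ ∈ Icc (0:ℝ) 1, a + τ • (x - a) ∈ D) :
    2 * weightedRayIntegral a u x
      + (∫ τ in (0:ℝ)..1, τ ^ 2 • fderiv ℝ u (a + τ • (x - a))) (x - a) = u x := by
  have hray : Continuous fun τ : ℝ ↦ a + τ • (x - a) := by fun_prop
  have hseg' : MapsTo (fun τ : ℝ ↦ a + τ • (x - a)) (uIcc 0 1) D := by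
    rwa [uIcc_of_le zero_le_one]
  have hu_ray : ContinuousOn (fun τ : ℝ ↦ u (a + τ • (x - a))) (uIcc 0 1) :=
    hu.continuousOn.comp hray.continuousOn hseg'
  have hDu_ray : ContinuousOn (fun τ : ℝ ↦ fderiv ℝ u (a + τ • (x - a))) (uIcc 0 1) :=
    (hu.continuousOn_fderiv_of_isOpen hD le_rfl).comp hray.continuousOn hseg'
  have hderiv : ∀ τ ∈ uIcc (0:ℝ) 1, HasDerivAt (fun τ ↦ τ ^ 2 * u (a + τ • (x - a)))
      (2 * τ * u (a + τ • (x - a)) + τ ^ 2 * fderiv ℝ u (a + τ • (x - a)) (x - a)) τ := by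
    intro τ hτ
    have hray_deriv : HasDerivAt (fun τ : ℝ ↦ a + τ • (x - a)) (x - a) τ := by
      simpa using ((hasDerivAt_id τ).smul_const (x - a)).const_add a
    have hu_at := ((hu.contDiffAt (hD.mem_nhds (hseg' hτ))).differentiableAt
      one_ne_zero).hasFDerivAt
    exact ((hasDerivAt_pow 2 τ).mul (hu_at.comp_hasDerivAt τ hray_deriv)).congr_deriv
      (by norm_num)
  have hint₁ : IntervalIntegrable (fun τ ↦ 2 * τ * u (a + τ • (x - a))) volume 0 1 :=
    ((continuousOn_const.mul continuousOn_id).mul hu_ray).intervalIntegrable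
  have hint₂ : IntervalIntegrable (fun τ ↦ τ ^ 2 * fderiv ℝ u (a + τ • (x - a)) (x - a))
      volume 0 1 :=
    ((continuousOn_id.pow 2).mul (hDu_ray.clm_apply continuousOn_const)).intervalIntegrable
  have hint₃ : IntervalIntegrable (fun τ ↦ τ ^ 2 • fderiv ℝ u (a + τ • (x - a))) volume 0 1 :=
    ((continuousOn_id.pow 2).smul hDu_ray).intervalIntegrable
  calc 2 * weightedRayIntegral a u x
        + (∫ τ in (0:ℝ)..1, τ ^ 2 • fderiv ℝ u (a + τ • (x - a))) (x - a)
      = ∫ τ in (0:ℝ)..1, (2 * τ * u (a + τ • (x - a))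
          + τ ^ 2 * fderiv ℝ u (a + τ • (x - a)) (x - a)) := by
        rw [ContinuousLinearMap.intervalIntegral_apply hint₃,
          intervalIntegral.integral_add hint₁ hint₂, weightedRayIntegral,
          ← intervalIntegral.integral_const_mul]
        simp only [mul_assoc, smul_apply, smul_eq_mul]
    _ = u x := by
        rw [intervalIntegral.integral_eq_sub_of_hasDerivAt hderiv (hint₁.add hint₂)]
        simp

end RayIntegral

theorem div2_smul_sub {Φ : (Fin 2 → ℝ) → ℝ} {x : Fin 2 → ℝ} (a : Fin 2 → ℝ)
    (hΦ : DifferentiableAt ℝ Φ x) :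
    div2 (fun y ↦ Φ y • (y - a)) x = 2 * Φ x + fderiv ℝ Φ x (x - a) := by
  have hderiv : HasFDerivAt (fun y ↦ Φ y • (y - a))
      (Φ x • ContinuousLinearMap.id ℝ _ + (fderiv ℝ Φ x).smulRight (x - a)) x :=
    hΦ.hasFDerivAt.smul ((hasFDerivAt_id x).sub_const a)
  conv_rhs => rw [pi_eq_sum_univ' (x - a)]
  simp [div2, hderiv.fderiv, Fin.sum_univ_two]
  ring

theorem poincareLift_eq_smul (a : Fin 2 → ℝ) (u : (Fin 2 → ℝ) → ℝ) :
    poincareLift a u = fun y ↦ weightedRayIntegral a u y • (y - a) := by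
  ext1 y
  exact intervalIntegral.integral_smul_const _ _

theorem poincare_lift_right_inverse_of_div_general
    (D : Set (Fin 2 → ℝ)) (hD : IsOpen D) (a : Fin 2 → ℝ)
    (hstar : ∀ x ∈ D, ∀ τ ∈ Set.Icc (0:ℝ) 1, a + τ • (x - a) ∈ D)
    (u : (Fin 2 → ℝ) → ℝ) (hu : ContDiffOn ℝ 1 u D) :
    ∀ x ∈ D, div2 (poincareLift a u) x = u x := by
  intro x hx
  have hW := hasFDerivAt_weightedRayIntegral hD hstar hu hx
  rw [poincareLift_eq_smul, div2_smul_sub a hW.differentiableAt, hW.fderiv]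
  exact two_mul_weightedRayIntegral_add_fderiv hD hu (hstar x hx)

theorem poincare_lift_right_inverse_of_div
    (D : Set (Fin 2 → ℝ)) (hD : IsOpen D) (a : Fin 2 → ℝ) (ha : a ∈ D)
    (hstar : ∀ x ∈ D, ∀ τ ∈ Set.Icc (0:ℝ) 1, a + τ • (x - a) ∈ D)
    (u : (Fin 2 → ℝ) → ℝ) (hu : ContDiffOn ℝ 1 u D) :
    ∀ x ∈ D, div2 (poincareLift a u) x = u x :=
  poincare_lift_right_inverse_of_div_general D hD a hstar u hu
end

section
/- For a point a ∈ ℝ² and a polynomial q of total degree ≤ p on ℝ², the Poincaré lifting (P_a q)(x) = ∫₀¹ τ q(a + τ(x−a)) (x−a) dτ belongs to the Raviart–Thomas space RT_p = (𝒫_p)² + x·𝒫̃_p, where 𝒫̃_p denotes homogeneous polynomials of degree p. -/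
open MeasureTheory

/-- The Raviart–Thomas space of order `p` in two dimensions, viewed as a set of
vector fields on `ℝ²`: fields of the form `x ↦ q(x) + r(x) • x` with `q` a vector
polynomial of total degree `≤ p` componentwise and `r` homogeneous of degree `p`. -/
def RTfun (p : ℕ) : Set ((Fin 2 → ℝ) → (Fin 2 → ℝ)) :=
  {v | ∃ q : Fin 2 → MvPolynomial (Fin 2) ℝ, ∃ r : MvPolynomial (Fin 2) ℝ,
    (∀ i, (q i).totalDegree ≤ p) ∧
    r ∈ MvPolynomial.homogeneousSubmodule (Fin 2) ℝ p ∧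
    ∀ x, v x = (fun i => MvPolynomial.eval x (q i)) + (MvPolynomial.eval x r) • x}

open MvPolynomial Finset

lemma my_eval_bind₁ (f : Fin 2 → ℝ) (g : Fin 2 → MvPolynomial (Fin 2) ℝ)
    (φ : MvPolynomial (Fin 2) ℝ) :
    eval f (bind₁ g φ) = eval (fun i => eval f (g i)) φ :=
  eval₂Hom_bind₁ _ _ _ _

lemma my_totalDegree_bind₁_le (g : Fin 2 → MvPolynomial (Fin 2) ℝ)
    (hg : ∀ i, (g i).totalDegree ≤ 1) (φ : MvPolynomial (Fin 2) ℝ) :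
    (bind₁ g φ).totalDegree ≤ φ.totalDegree := by
  conv_lhs => rw [φ.as_sum, map_sum]
  refine (totalDegree_finset_sum _ _).trans (Finset.sup_le fun v hv => ?_)
  rw [bind₁_monomial]
  refine (totalDegree_mul _ _).trans ?_
  rw [totalDegree_C, zero_add]
  refine le_trans ((totalDegree_finset_prod _ _).trans ?_) (le_totalDegree hv)
  rw [Finsupp.sum]
  refine Finset.sum_le_sum fun i _ => ?_
  exact (totalDegree_pow _ _).trans (by
    calc v i * (g i).totalDegree ≤ v i * 1 := Nat.mul_le_mul_left _ (hg i)
    _ = v i := Nat.mul_one _)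

lemma my_eval_smul {φ : MvPolynomial (Fin 2) ℝ} {n : ℕ} (h : φ.IsHomogeneous n)
    (c : ℝ) (z : Fin 2 → ℝ) : eval (c • z) φ = c ^ n * eval z φ := by
  rw [eval_eq, eval_eq, Finset.mul_sum]
  refine Finset.sum_congr rfl fun d hd => ?_
  have hdeg : ∑ i ∈ d.support, d i = n := by
    have := h (MvPolynomial.mem_support_iff.mp hd)
    simp only [Finsupp.weight_apply, Finsupp.sum, Pi.one_apply, smul_eq_mul, mul_one] at this
    exact this
  calc coeff d φ * ∏ i ∈ d.support, (c • z) i ^ d i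
      = coeff d φ * ((∏ i ∈ d.support, c ^ d i) * ∏ i ∈ d.support, z i ^ d i) := by
        rw [← Finset.prod_mul_distrib]
        simp [mul_pow, Pi.smul_apply, smul_eq_mul]
    _ = c ^ n * (coeff d φ * ∏ i ∈ d.support, z i ^ d i) := by
        rw [Finset.prod_pow_eq_pow_sum]
        rw [hdeg]; ring


theorem poincare_lift_of_polynomial_mem_RT
    (p : ℕ) (a : Fin 2 → ℝ) (q : MvPolynomial (Fin 2) ℝ) (hq : q.totalDegree ≤ p) :
    poincareLift a (fun x => MvPolynomial.eval x q) ∈ RTfun p := by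
  classical
  -- shifted polynomial: qa(y) = q(a + y)
  set qa : MvPolynomial (Fin 2) ℝ := bind₁ (fun i => X i + C (a i)) q with hqa_def
  have hqa : qa.totalDegree ≤ p := by
    refine le_trans (my_totalDegree_bind₁_le _ (fun i => ?_) q) hq
    refine (totalDegree_add _ _).trans ?_
    simp [totalDegree_X, totalDegree_C]
  -- c k : the degree-k piece, recentered at a
  set c : ℕ → MvPolynomial (Fin 2) ℝ :=
    fun k => bind₁ (fun i => X i - C (a i)) (homogeneousComponent k qa) with hc_def
  have hck : ∀ k, (c k).totalDegree ≤ k := by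
    intro k
    refine le_trans (my_totalDegree_bind₁_le _ (fun i => ?_) _)
      (homogeneousComponent_isHomogeneous k qa).totalDegree_le
    refine (totalDegree_sub _ _).trans ?_
    simp [totalDegree_X, totalDegree_C]
  -- key expansion
  have keyA : ∀ (τ : ℝ) (x : Fin 2 → ℝ),
      eval (a + τ • (x - a)) q = ∑ k ∈ range (p + 1), τ ^ k * eval x (c k) := by
    intro τ x
    have h1 : eval (a + τ • (x - a)) q = eval (τ • (x - a)) qa := by
      rw [hqa_def, my_eval_bind₁]
      have hfun : (fun i => eval (τ • (x - a)) (X i + C (a i))) = a + τ • (x - a) := by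
        funext i; simp [add_comm]
      rw [hfun]
    have h2 : qa = ∑ k ∈ range (p + 1), homogeneousComponent k qa := by
      conv_lhs => rw [← sum_homogeneousComponent qa]
      refine Finset.sum_subset (Finset.range_subset_range.mpr (by omega)) fun k _ hk => ?_
      apply homogeneousComponent_eq_zero
      simp only [Finset.mem_range, not_lt] at hk
      omega
    rw [h1, h2, map_sum]
    refine Finset.sum_congr rfl fun k _ => ?_
    rw [my_eval_smul (homogeneousComponent_isHomogeneous k qa) τ (x - a)]
    congr 1
    rw [hc_def, my_eval_bind₁]
    have hfun : (fun i => eval x (X i - C (a i))) = x - a := by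
      funext i; simp
    rw [hfun]
  -- integral computation
  have keyB : ∀ x : Fin 2 → ℝ,
      poincareLift a (fun y => eval y q) x
        = (∑ k ∈ range (p + 1), (((k : ℝ) + 2)⁻¹ * eval x (c k))) • (x - a) := by
    intro x
    have hfun : (fun τ : ℝ => (τ * eval (a + τ • (x - a)) q) • (x - a))
        = fun τ : ℝ => (∑ k ∈ range (p + 1), eval x (c k) * τ ^ (k + 1)) • (x - a) := by
      funext τ
      rw [keyA τ x, Finset.mul_sum]
      congr 1
      exact Finset.sum_congr rfl fun k _ => by ring
    rw [poincareLift, hfun, intervalIntegral.integral_smul_const]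
    congr 1
    rw [intervalIntegral.integral_finset_sum (f := fun k (τ : ℝ) => eval x (c k) * τ ^ (k + 1))
      (fun k _ => ((continuous_const.mul (continuous_pow _)).intervalIntegrable _ _))]
    refine Finset.sum_congr rfl fun k _ => ?_
    rw [intervalIntegral.integral_const_mul, integral_pow]
    rw [one_pow, zero_pow (Nat.succ_ne_zero _), sub_zero]
    push_cast
    rw [div_eq_mul_inv, one_mul]
    rw [show ((k : ℝ) + 1 + 1) = (k : ℝ) + 2 by ring]
    ring
  -- assemble the RT decomposition
  set hcp : MvPolynomial (Fin 2) ℝ := homogeneousComponent p (c p) with hcp_def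
  set s : MvPolynomial (Fin 2) ℝ := c p - hcp with hs_def
  have hs_support : ∀ d ∈ s.support, d.degree < p := by
    intro d hd
    rw [mem_support_iff] at hd
    have hcoeff : coeff d s = coeff d (c p) - coeff d hcp := by rw [hs_def, coeff_sub]
    by_cases hdp : d.degree = p
    · exfalso
      apply hd
      rw [hcoeff, hcp_def, coeff_homogeneousComponent, if_pos hdp, sub_self]
    · have hne : coeff d (c p) ≠ 0 := by
        intro h0
        apply hd
        rw [hcoeff, hcp_def, coeff_homogeneousComponent, if_neg hdp, h0, sub_zero]
      have : d.degree ≤ p := by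
        have := le_totalDegree (p := c p) (mem_support_iff.mpr hne)
        exact le_trans (le_of_eq rfl) (this.trans (hck p))
      omega
  refine ⟨fun i => (∑ k ∈ range p, C (((k : ℝ) + 2)⁻¹) * (c k * (X i - C (a i))))
      + C (((p : ℝ) + 2)⁻¹) * (s * X i - C (a i) * c p),
    C (((p : ℝ) + 2)⁻¹) * hcp, ?_, ?_, ?_⟩
  · -- degree bound
    intro i
    have hXC : (X i - C (a i) : MvPolynomial (Fin 2) ℝ).totalDegree ≤ 1 := by
      refine (totalDegree_sub _ _).trans ?_
      simp [totalDegree_X, totalDegree_C]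
    refine (totalDegree_add _ _).trans (max_le ?_ ?_)
    · refine (totalDegree_finset_sum _ _).trans (Finset.sup_le fun k hk => ?_)
      refine (totalDegree_mul _ _).trans ?_
      rw [totalDegree_C, zero_add]
      refine (totalDegree_mul _ _).trans ?_
      have h1 := hck k
      rw [Finset.mem_range] at hk
      omega
    · refine (totalDegree_mul _ _).trans ?_
      rw [totalDegree_C, zero_add]
      refine (totalDegree_sub _ _).trans (max_le ?_ ?_)
      · -- totalDegree (s * X i) ≤ p
        by_cases hs0 : s = 0
        · simp [hs0]
        have hslt : s.totalDegree < p := by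
          rcases Nat.eq_zero_or_pos p with hp | hp
          · exfalso
            obtain ⟨d, hd⟩ := exists_coeff_ne_zero hs0
            have := hs_support d (mem_support_iff.mpr hd)
            omega
          rw [MvPolynomial.totalDegree]
          exact (Finset.sup_lt_iff hp).mpr hs_support
        refine (totalDegree_mul _ _).trans ?_
        rw [totalDegree_X]
        omega
      · refine (totalDegree_mul _ _).trans ?_
        rw [totalDegree_C, zero_add]
        exact hck p
  · rw [mem_homogeneousSubmodule]
    exact (homogeneousComponent_isHomogeneous p (c p)).C_mul _
  · intro x
    rw [keyB x]
    funext i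
    simp only [Pi.add_apply, Pi.smul_apply, Pi.sub_apply, smul_eq_mul, map_add, map_sum,
      map_mul, map_sub, eval_C, eval_X]
    rw [Finset.sum_range_succ, add_mul, Finset.sum_mul]
    have hsum : (∑ k ∈ range p, ((k : ℝ) + 2)⁻¹ * eval x (c k) * (x i - a i))
        = ∑ k ∈ range p, ((k : ℝ) + 2)⁻¹ * (eval x (c k) * (x i - a i)) :=
      Finset.sum_congr rfl fun k _ => by ring
    rw [hsum, map_sub]
    ring
end

section
/- A vector field v in the two-dimensional Raviart–Thomas space RT_p is divergence-free if and only if v = curl φ (the rotated gradient (−∂₂φ, ∂₁φ)) for some polynomial φ of total degree ≤ p+1. Equivalently, RT_p ∩ ker(div) = curl(𝒫_{p+1}). -/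
/-!
If `v = q + x r ∈ RT_p` with `r` homogeneous of degree `p`, Euler's identity gives
`div (x r) = (p + 2) r`, while `div q` has degree `< p`. So the degree-`p` part of `div v` is
`(p + 2) r`, and `div v = 0` forces `r = 0`: `v` is a divergence-free field of degree `≤ p`.
Its homogeneous components `v_k` are again divergence-free, and by Euler's identity the stream
function `ψ_k = x₁ v_{k,2} - x₂ v_{k,1}` satisfies `curl ψ_k = (k + 1) v_k`, so
`φ = ∑ ψ_k / (k + 1)` works. Conversely `div (curl φ) = 0` because partial derivatives commute.
-/

/-- The Raviart–Thomas space of order `p` in two dimensions, at the level of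
polynomial vector fields: `RT_p = (𝒫_p)² + x 𝒫̃_p`. -/
def RTpoly (p : ℕ) : Set (Fin 2 → MvPolynomial (Fin 2) ℝ) :=
  {v | ∃ q : Fin 2 → MvPolynomial (Fin 2) ℝ, ∃ r : MvPolynomial (Fin 2) ℝ,
    (∀ i, (q i).totalDegree ≤ p) ∧
    r ∈ MvPolynomial.homogeneousSubmodule (Fin 2) ℝ p ∧
    ∀ i, v i = q i + MvPolynomial.X i * r}

noncomputable def divPoly (v : Fin 2 → MvPolynomial (Fin 2) ℝ) : MvPolynomial (Fin 2) ℝ :=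
  MvPolynomial.pderiv 0 (v 0) + MvPolynomial.pderiv 1 (v 1)

open Finset

namespace MvPolynomial

section CommSemiring

variable {σ R : Type*} [CommSemiring R]

theorem homogeneousComponent_pderiv (n : ℕ) (i : σ) (f : MvPolynomial σ R) :
    homogeneousComponent n (pderiv i f) = pderiv i (homogeneousComponent (n + 1) f) := by
  ext m
  simp only [coeff_homogeneousComponent, coeff_pderiv, map_add, Finsupp.degree_single]
  split_ifs <;> simp_all

theorem totalDegree_pderiv_le (i : σ) (f : MvPolynomial σ R) :
    (pderiv i f).totalDegree ≤ f.totalDegree - 1 := by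
  refine Finset.sup_le fun m hm => ?_
  rw [mem_support_iff, coeff_pderiv] at hm
  have hle : (m + Finsupp.single i 1).degree ≤ f.totalDegree :=
    le_totalDegree (mem_support_iff.mpr (left_ne_zero_of_mul hm))
  change m.degree ≤ _
  rw [map_add, Finsupp.degree_single] at hle
  omega

theorem sum_homogeneousComponent_of_totalDegree_le {f : MvPolynomial σ R} {n : ℕ}
    (hf : f.totalDegree ≤ n) : ∑ k ∈ range (n + 1), homogeneousComponent k f = f := by
  conv_rhs => rw [← sum_homogeneousComponent f]
  refine (sum_subset (range_subset_range.mpr (by omega)) fun k hk hk' => ?_).symm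
  exact homogeneousComponent_eq_zero _ _ (by simp only [mem_range] at hk hk'; omega)

theorem sum_pderiv_X_mul [Fintype σ] {r : MvPolynomial σ R} {n : ℕ} (hr : r.IsHomogeneous n) :
    ∑ i, pderiv i (X i * r) = (n + Fintype.card σ) • r := by
  simp only [Derivation.leibniz, pderiv_X_self, smul_eq_mul, one_mul, sum_add_distrib,
    hr.sum_X_mul_pderiv, add_smul, sum_const, card_univ, mul_comm r]

end CommSemiring

theorem pderiv_pderiv_comm {σ R : Type*} [CommRing R] (i j : σ) (f : MvPolynomial σ R) :
    pderiv i (pderiv j f) = pderiv j (pderiv i f) := by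
  have : ⁅pderiv (R := R) i, pderiv (R := R) (σ := σ) j⁆ = 0 := by
    refine derivation_ext fun k => ?_
    rw [Derivation.commutator_apply]
    classical simp [pderiv_X, Pi.single_apply, apply_ite]
  rw [← sub_eq_zero, ← Derivation.commutator_apply, this, Derivation.zero_apply]

end MvPolynomial

open MvPolynomial

section Plane

variable {R : Type*} [CommRing R]

noncomputable def streamFunction (v : Fin 2 → MvPolynomial (Fin 2) R) : MvPolynomial (Fin 2) R :=
  X 0 * v 1 - X 1 * v 0

theorem pderiv_zero_streamFunction {v : Fin 2 → MvPolynomial (Fin 2) R} {k : ℕ}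
    (hv : (v 1).IsHomogeneous k) (hdiv : pderiv 0 (v 0) + pderiv 1 (v 1) = 0) :
    pderiv 0 (streamFunction v) = (k + 1) • v 1 := by
  have euler := hv.sum_X_mul_pderiv
  rw [Fin.sum_univ_two] at euler
  simp only [streamFunction, map_sub, Derivation.leibniz, pderiv_X_self,
    pderiv_X_of_ne (show (1 : Fin 2) ≠ 0 by decide), smul_eq_mul, nsmul_eq_mul,
    Nat.cast_succ] at euler ⊢
  linear_combination euler - X 1 * hdiv

theorem pderiv_one_streamFunction {v : Fin 2 → MvPolynomial (Fin 2) R} {k : ℕ}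
    (hv : (v 0).IsHomogeneous k) (hdiv : pderiv 0 (v 0) + pderiv 1 (v 1) = 0) :
    pderiv 1 (streamFunction v) = -((k + 1) • v 0) := by
  have euler := hv.sum_X_mul_pderiv
  rw [Fin.sum_univ_two] at euler
  simp only [streamFunction, map_sub, Derivation.leibniz, pderiv_X_self,
    pderiv_X_of_ne (show (0 : Fin 2) ≠ 1 by decide), smul_eq_mul, nsmul_eq_mul,
    Nat.cast_succ] at euler ⊢
  linear_combination -euler + X 0 * hdiv

theorem isHomogeneous_streamFunction {v : Fin 2 → MvPolynomial (Fin 2) R} {k : ℕ}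
    (hv : ∀ i, (v i).IsHomogeneous k) : (streamFunction v).IsHomogeneous (k + 1) := by
  rw [add_comm]
  exact ((isHomogeneous_X R 0).mul (hv 1)).sub ((isHomogeneous_X R 1).mul (hv 0))

theorem pderiv_add_pderiv_homogeneousComponent {v : Fin 2 → MvPolynomial (Fin 2) R}
    (hdiv : pderiv 0 (v 0) + pderiv 1 (v 1) = 0) (k : ℕ) :
    pderiv 0 (homogeneousComponent k (v 0)) + pderiv 1 (homogeneousComponent k (v 1)) = 0 := by
  cases k with
  | zero => simp
  | succ k => rw [← homogeneousComponent_pderiv, ← homogeneousComponent_pderiv, ← map_add, hdiv,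
      map_zero]

theorem exists_curl_eq_of_pderiv_add_pderiv_eq_zero {K : Type*} [Field K] [CharZero K]
    {v : Fin 2 → MvPolynomial (Fin 2) K} {p : ℕ} (hv : ∀ i, (v i).totalDegree ≤ p)
    (hdiv : pderiv 0 (v 0) + pderiv 1 (v 1) = 0) :
    ∃ φ : MvPolynomial (Fin 2) K, φ.totalDegree ≤ p + 1 ∧ v 0 = -pderiv 1 φ ∧ v 1 = pderiv 0 φ := by
  set w : ℕ → Fin 2 → MvPolynomial (Fin 2) K := fun k i => homogeneousComponent k (v i)
  have hw : ∀ k i, (w k i).IsHomogeneous k := fun k i => homogeneousComponent_isHomogeneous k _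
  have hwdiv : ∀ k, pderiv 0 (w k 0) + pderiv 1 (w k 1) = 0 :=
    pderiv_add_pderiv_homogeneousComponent hdiv
  have hscale : ∀ (k : ℕ) (f : MvPolynomial (Fin 2) K), ((k : K) + 1)⁻¹ • (k + 1) • f = f := by
    intro k f
    rw [← Nat.cast_smul_eq_nsmul K, Nat.cast_succ, inv_smul_smul₀ (Nat.cast_add_one_ne_zero k)]
  refine ⟨∑ k ∈ range (p + 1), ((k : K) + 1)⁻¹ • streamFunction (w k), ?_, ?_, ?_⟩
  · rw [← mem_restrictTotalDegree]
    refine Submodule.sum_mem _ fun k hk => Submodule.smul_mem _ _ ?_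
    rw [mem_restrictTotalDegree]
    exact ((isHomogeneous_streamFunction (hw k)).totalDegree_le).trans
      (by simp only [mem_range] at hk; omega)
  · have hk k := pderiv_one_streamFunction (hw k 0) (hwdiv k)
    simp only [map_sum, Derivation.map_smul, hk, smul_neg, hscale, sum_neg_distrib, neg_neg]
    exact (sum_homogeneousComponent_of_totalDegree_le (hv 0)).symm
  · have hk k := pderiv_zero_streamFunction (hw k 1) (hwdiv k)
    simp only [map_sum, Derivation.map_smul, hk, hscale]
    exact (sum_homogeneousComponent_of_totalDegree_le (hv 1)).symm

end Plane

theorem totalDegree_le_of_mem_RTpoly_of_divPoly_eq_zero {p : ℕ}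
    {v : Fin 2 → MvPolynomial (Fin 2) ℝ} (hv : v ∈ RTpoly p) (hdiv : divPoly v = 0) (i : Fin 2) :
    (v i).totalDegree ≤ p := by
  obtain ⟨q, r, hq, hr, hvqr⟩ := hv
  rw [mem_homogeneousSubmodule] at hr
  have hdiv_q : homogeneousComponent p (pderiv 0 (q 0) + pderiv 1 (q 1)) = 0 := by
    simp only [map_add, homogeneousComponent_pderiv,
      homogeneousComponent_eq_zero _ _ (Nat.lt_succ_of_le (hq _)), map_zero, add_zero]
  have hdiv_r : pderiv 0 (X 0 * r) + pderiv 1 (X 1 * r) = (p + 2) • r := by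
    rw [← Fin.sum_univ_two (fun i => pderiv i (X i * r)), sum_pderiv_X_mul hr, Fintype.card_fin]
  have hsplit : divPoly v = (pderiv 0 (q 0) + pderiv 1 (q 1)) + (p + 2) • r := by
    rw [← hdiv_r, divPoly, hvqr 0, hvqr 1, map_add, map_add]
    abel
  have hr0 : (p + 2) • r = 0 := by
    have h := congrArg (homogeneousComponent p) hdiv
    rwa [hsplit, map_add, hdiv_q, zero_add, map_nsmul, homogeneousComponent_eq_self hr,
      map_zero] at h
  rw [hvqr, (smul_eq_zero.mp hr0).resolve_left (by omega), mul_zero, add_zero]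
  exact hq i

theorem curl_mem_RTpoly {p : ℕ} {φ : MvPolynomial (Fin 2) ℝ} (hφ : φ.totalDegree ≤ p + 1) :
    ![-pderiv 1 φ, pderiv 0 φ] ∈ RTpoly p := by
  refine ⟨![-pderiv 1 φ, pderiv 0 φ], 0, fun i => ?_, zero_mem _, by simp⟩
  have := fun j => (totalDegree_pderiv_le j φ).trans (Nat.sub_le_of_le_add hφ)
  fin_cases i <;> simp [totalDegree_neg, this]

theorem divPoly_curl (φ : MvPolynomial (Fin 2) ℝ) : divPoly ![-pderiv 1 φ, pderiv 0 φ] = 0 := by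
  simp only [divPoly, Matrix.cons_val_zero, Matrix.cons_val_one, map_neg, pderiv_pderiv_comm (0 : Fin 2) 1,
    neg_add_cancel]

/-- A field in `RT_p` is divergence-free iff it is the rotated gradient
`curl φ = (−∂₂φ, ∂₁φ)` of a polynomial `φ` of total degree `≤ p+1`:
`RT_p ∩ ker div = curl 𝒫_{p+1}`. -/
theorem RT_divfree_eq_curl (p : ℕ) :
    {v | v ∈ RTpoly p ∧ divPoly v = 0} =
    {v : Fin 2 → MvPolynomial (Fin 2) ℝ | ∃ φ : MvPolynomial (Fin 2) ℝ,
      φ.totalDegree ≤ p + 1 ∧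
      v 0 = -(MvPolynomial.pderiv 1 φ) ∧ v 1 = MvPolynomial.pderiv 0 φ} := by
  ext v
  constructor
  · rintro ⟨hv, hdiv⟩
    exact exists_curl_eq_of_pderiv_add_pderiv_eq_zero
      (totalDegree_le_of_mem_RTpoly_of_divPoly_eq_zero hv hdiv) hdiv
  · rintro ⟨φ, hφ, h0, h1⟩
    have hv : v = ![-pderiv 1 φ, pderiv 0 φ] := by
      ext1 i; fin_cases i <;> assumption
    exact hv ▸ ⟨curl_mem_RTpoly hφ, divPoly_curl φ⟩
end

section
/- Let X be a Hilbert space and a : X × X → ℂ a bounded sesquilinear form of the shape a = c + k, where c is X-coercive (|c(u,u)| ≥ α‖u‖²) and k is compact (i.e., k(u,v) = ⟨Ku, v⟩ with K : X → X compact). If the problem a(u,v) = 0 for all v implies u = 0 (injectivity), then a satisfies an inf-sup condition: there exists γ > 0 such that sup_{v≠0} |a(u,v)|/‖v‖ ≥ γ‖u‖ for all u ∈ X. -/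
open Filter Topology

/-!
A bounded form that is additive in each argument is real-bilinear, so `u ↦ a(u, ·)` is a
bounded operator `B`. Coercivity of `c` gives the Gårding inequality `α‖u‖ ≤ ‖B u‖ + ‖K u‖`.
By the Peetre–Tartar argument, an injective operator satisfying such an inequality with `K`
compact is bounded below: if `‖B wₙ‖ → 0` along unit vectors, compactness of `K` and the
inequality make a subsequence of `wₙ` Cauchy, and its limit is a unit vector in the kernel of `B`.
-/

theorem map_real_smul_of_add_of_norm_le {E F : Type*} [NormedAddCommGroup E] [NormedSpace ℝ E]
    [NormedAddCommGroup F] [NormedSpace ℝ F] (f : E → F) (hadd : ∀ x y, f (x + y) = f x + f y)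
    (C : ℝ) (hC : ∀ x, ‖f x‖ ≤ C * ‖x‖) (r : ℝ) (x : E) : f (r • x) = r • f x :=
  map_real_smul (AddMonoidHom.mk' f hadd) (AddMonoidHomClass.continuous_of_bound _ C hC) r x

theorem exists_continuousLinearMap₂_eq_of_add_of_norm_le {E F G : Type*}
    [NormedAddCommGroup E] [NormedSpace ℝ E] [NormedAddCommGroup F] [NormedSpace ℝ F]
    [NormedAddCommGroup G] [NormedSpace ℝ G] (a : E → F → G) (M : ℝ)
    (hbdd : ∀ u v, ‖a u v‖ ≤ M * ‖u‖ * ‖v‖)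
    (hadd₁ : ∀ u u' v, a (u + u') v = a u v + a u' v)
    (hadd₂ : ∀ u v v', a u (v + v') = a u v + a u v') :
    ∃ B : E →L[ℝ] F →L[ℝ] G, ∀ u v, B u v = a u v := by
  have hsmul₁ : ∀ (r : ℝ) u v, a (r • u) v = r • a u v := fun r u v =>
    map_real_smul_of_add_of_norm_le (a · v) (hadd₁ · · v) (M * ‖v‖)
      (fun u => (hbdd u v).trans_eq (mul_right_comm _ _ _)) r u
  have hsmul₂ : ∀ (r : ℝ) u v, a u (r • v) = r • a u v := fun r u v =>
    map_real_smul_of_add_of_norm_le (a u) (hadd₂ u) (M * ‖u‖) (hbdd u) r v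
  exact ⟨(LinearMap.mk₂ ℝ a hadd₁ hsmul₁ hadd₂ hsmul₂).mkContinuous₂ M hbdd, fun _ _ => rfl⟩

theorem mul_norm_le_norm_add_norm_of_coercive {X : Type*} [NormedAddCommGroup X]
    [InnerProductSpace ℂ X] (B : X →L[ℝ] X →L[ℝ] ℂ) (c : X → X → ℂ) (K : X →L[ℂ] X)
    (hB : ∀ u v, B u v = c u v + inner ℂ (K u) v) {α : ℝ} (hcoer : ∀ u, α * ‖u‖ ^ 2 ≤ ‖c u u‖)
    (u : X) : α * ‖u‖ ≤ ‖B u‖ + ‖K u‖ := by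
  rcases eq_or_ne u 0 with rfl | hu
  · simp
  refine le_of_mul_le_mul_right ?_ (norm_pos_iff.2 hu)
  calc α * ‖u‖ * ‖u‖ = α * ‖u‖ ^ 2 := by ring
    _ ≤ ‖c u u‖ := hcoer u
    _ = ‖B u u - inner ℂ (K u) u‖ := by rw [hB, add_sub_cancel_right]
    _ ≤ ‖B u u‖ + ‖inner ℂ (K u) u‖ := norm_sub_le _ _
    _ ≤ ‖B u‖ * ‖u‖ + ‖K u‖ * ‖u‖ := add_le_add ((B u).le_opNorm u) (norm_inner_le_norm _ _)
    _ = (‖B u‖ + ‖K u‖) * ‖u‖ := by ring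

section PeetreTartar

variable {𝕜 E F G : Type*} [RCLike 𝕜] [NormedAddCommGroup E] [NormedSpace 𝕜 E]
  [NormedAddCommGroup F] [NormedSpace 𝕜 F] [NormedAddCommGroup G] [NormedSpace 𝕜 G]

theorem exists_seq_norm_eq_one_tendsto_zero_of_forall_lt (T : E →L[𝕜] F)
    (h : ∀ γ : ℝ, 0 < γ → ∃ u, ‖T u‖ < γ * ‖u‖) :
    ∃ w : ℕ → E, (∀ n, ‖w n‖ = 1) ∧ Tendsto (fun n => T (w n)) atTop (𝓝 0) := by
  choose u hu using fun n : ℕ => h (1 / (n + 1)) (by positivity)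
  have hu0 : ∀ n, u n ≠ 0 := fun n h0 => by simpa [h0] using hu n
  refine ⟨fun n => (‖u n‖ : 𝕜)⁻¹ • u n, fun n => norm_smul_inv_norm (hu0 n), ?_⟩
  rw [tendsto_zero_iff_norm_tendsto_zero]
  refine squeeze_zero (fun _ => norm_nonneg _) (fun n => ?_) tendsto_one_div_add_atTop_nhds_zero_nat
  rw [map_smul, norm_smul, norm_inv, RCLike.norm_ofReal, abs_norm,
    inv_mul_le_iff₀ (norm_pos_iff.2 (hu0 n)), mul_comm]
  exact (hu n).le

theorem cauchySeq_of_mul_norm_le_norm_add_norm (T : E →L[𝕜] F) (K : E →L[𝕜] G) {α : ℝ}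
    (hα : 0 < α) (h : ∀ u, α * ‖u‖ ≤ ‖T u‖ + ‖K u‖) {w : ℕ → E}
    (hT : CauchySeq fun n => T (w n)) (hK : CauchySeq fun n => K (w n)) : CauchySeq w := by
  rw [cauchySeq_iff_tendsto_dist_atTop_0] at hT hK ⊢
  refine squeeze_zero (fun _ => dist_nonneg) (fun p => ?_) (by simpa using (hT.add hK).const_mul α⁻¹)
  rw [le_inv_mul_iff₀ hα, dist_eq_norm, dist_eq_norm, dist_eq_norm, ← map_sub, ← map_sub]
  exact h _

theorem exists_pos_mul_norm_le_of_injective_of_isCompactOperator [CompleteSpace E]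
    {T : E →L[𝕜] F} (hT : Function.Injective T) {K : E →L[𝕜] G} (hK : IsCompactOperator K)
    {α : ℝ} (hα : 0 < α) (h : ∀ u, α * ‖u‖ ≤ ‖T u‖ + ‖K u‖) :
    ∃ γ : ℝ, 0 < γ ∧ ∀ u, γ * ‖u‖ ≤ ‖T u‖ := by
  by_contra! hcon
  obtain ⟨w, hw, hTw⟩ := exists_seq_norm_eq_one_tendsto_zero_of_forall_lt T hcon
  obtain ⟨y, -, φ, hφ, hKw⟩ := (hK.isCompact_closure_image_closedBall (f := K.toLinearMap) 1)
    |>.tendsto_subseq (x := fun n => K (w n)) fun n => subset_closure ⟨w n, by simp [hw], rfl⟩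
  have hTwφ := hTw.comp hφ.tendsto_atTop
  obtain ⟨z, hz⟩ := cauchySeq_tendsto_of_complete
    (cauchySeq_of_mul_norm_le_norm_add_norm T K hα h hTwφ.cauchySeq hKw.cauchySeq)
  have hTz : T z = 0 := tendsto_nhds_unique ((T.continuous.tendsto z).comp hz) hTwφ
  have hz1 : ‖z‖ = 1 := tendsto_nhds_unique hz.norm (by simp [hw])
  simp [hT (hTz.trans T.map_zero.symm)] at hz1

end PeetreTartar

theorem ContinuousLinearMap.exists_norm_le_one_half_opNorm_le {𝕜 E F : Type*} [RCLike 𝕜]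
    [NormedAddCommGroup E] [NormedSpace 𝕜 E] [NormedAddCommGroup F] [NormedSpace 𝕜 F]
    (f : E →L[𝕜] F) : ∃ v, ‖v‖ ≤ 1 ∧ ‖f‖ / 2 ≤ ‖f v‖ := by
  rcases (norm_nonneg f).eq_or_lt with h | h
  · exact ⟨0, by simp, by simp [← h]⟩
  · obtain ⟨v, hv, hfv⟩ := f.exists_lt_apply_of_lt_opNorm (half_lt_self h)
    exact ⟨v, hv.le, hfv.le⟩

/-- Fredholm alternative for coercive-plus-compact sesquilinear forms: if
`a = c + k` with `c` coercive and `k` induced by a compact operator `K`, and the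
problem `a(u,·) = 0` only has the trivial solution, then `a` satisfies a
continuous inf-sup condition. -/
theorem coercive_plus_compact_injective_infSup
    (X : Type*) [NormedAddCommGroup X] [InnerProductSpace ℂ X] [CompleteSpace X]
    (a c k : X → X → ℂ)
    (ha : ∀ u v : X, a u v = c u v + k u v)
    (α : ℝ) (hα : 0 < α) (hcoer : ∀ u : X, α * ‖u‖ ^ 2 ≤ ‖c u u‖)
    (K : X →L[ℂ] X) (hKcompact : IsCompactOperator K)
    (hk : ∀ u v : X, k u v = inner (𝕜 := ℂ) (K u) v)
    (M : ℝ) (hbdd : ∀ u v : X, ‖a u v‖ ≤ M * ‖u‖ * ‖v‖)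
    (hadd₁ : ∀ u u' v : X, a (u + u') v = a u v + a u' v)
    (hadd₂ : ∀ u v v' : X, a u (v + v') = a u v + a u v')
    (hinj : ∀ u : X, (∀ v : X, a u v = 0) → u = 0) :
    ∃ γ : ℝ, 0 < γ ∧ ∀ u : X, ∃ v : X, ‖v‖ ≤ 1 ∧ γ * ‖u‖ ≤ ‖a u v‖ := by
  obtain ⟨B, hB⟩ := exists_continuousLinearMap₂_eq_of_add_of_norm_le a M hbdd hadd₁ hadd₂
  have hBinj : Function.Injective B := (injective_iff_map_eq_zero B).2 fun u hu =>
    hinj u fun v => by rw [← hB, hu, zero_apply]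
  have hgarding := mul_norm_le_norm_add_norm_of_coercive B c K
    (fun u v => by rw [hB, ha, hk]) hcoer
  obtain ⟨γ, hγ, hγB⟩ := exists_pos_mul_norm_le_of_injective_of_isCompactOperator hBinj
    (K := K.restrictScalars ℝ) hKcompact hα hgarding
  refine ⟨γ / 2, by positivity, fun u => ?_⟩
  obtain ⟨v, hv, hBv⟩ := (B u).exists_norm_le_one_half_opNorm_le
  exact ⟨v, hv, by rw [← hB]; linarith [hγB u]⟩
end
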